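/- With Δ(S) as in the excess reduction (δ(0) = "()", δ(1) = "((", Δ(S) = "(" · δ(S) · ")"^{k+1}, k = 2·rank₁(S,n)): for each 1 ≤ i ≤ n, letting p = 2i (the position of the first character of δ(S[i]) in Δ(S)), the maximum of excess over positions {p, p+1} is attained at position p iff S[i] = 0, and the minimum over {p, p+1} is attained at position p iff S[i] = 1. Hence access to S reduces to range-maximum/minimum-position queries on the excess sequence of Δ(S). -/

import Mathlib

/-- δ(0) = "()", δ(1) = "((". A parenthesis is `true` iff it is '('. -/
def δp (b : Bool) : List Bool := if b then [true, true] else [true, false]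

/-- Δ(S) = "(" · δ(S[1])···δ(S[n]) · ")"^{k+1}, where k = 2·rank₁(S,n). -/
def ΔEx (S : List Bool) : List Bool :=
  true :: (S.flatMap δp ++ List.replicate (2 * S.count true + 1) false)

/-- Open minus closed parentheses among the first `j` characters. -/
def excess (T : List Bool) (j : ℕ) : ℤ :=
  ((T.take j).count true : ℤ) - ((T.take j).count false : ℤ)

/-!
Every block `δ(b)` is `"(" · b` read as parentheses, so the character that takes the excess of
`Δ(S)` from `2i` to `2i + 1` is the bit `S[i]` itself: the excess rises there iff `S[i] = 1`.
-/

lemma δp_eq (b : Bool) : δp b = [true, b] := by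
  cases b <;> rfl

lemma length_flatMap_δp (S : List Bool) : (S.flatMap δp).length = 2 * S.length := by
  induction S with
  | nil => rfl
  | cons a t ih => simp [δp_eq, ih]; ring

lemma getElem?_flatMap_δp_two_mul_add_one (S : List Bool) (m : ℕ) :
    (S.flatMap δp)[2 * m + 1]? = S[m]? := by
  induction S generalizing m with
  | nil => simp
  | cons a t ih =>
    cases m with
    | zero => simp [δp_eq]
    | succ m => simpa [δp_eq, Nat.mul_succ] using ih m

lemma getElem?_ΔEx_two_mul_add_two (S : List Bool) {m : ℕ} (hm : m < S.length) :
    (ΔEx S)[2 * m + 2]? = S[m]? := by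
  have hlt : 2 * m + 1 < (S.flatMap δp).length := by rw [length_flatMap_δp]; omega
  rw [ΔEx, List.getElem?_cons_succ, List.getElem?_append_left hlt,
    getElem?_flatMap_δp_two_mul_add_one]

lemma excess_succ (T : List Bool) {j : ℕ} {b : Bool} (hb : T[j]? = some b) :
    excess T (j + 1) = excess T j + if b then 1 else -1 := by
  unfold excess
  rw [List.take_add_one, hb]
  cases b <;> simp [List.count_append] <;> ring

/-- For 1 ≤ i ≤ n, with p = 2i the position of the first character of δ(S[i]) in Δ(S):
the maximum of excess over positions {p, p+1} is attained at p iff S[i] = 0, and the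
minimum is attained at p iff S[i] = 1. -/
theorem stmt16 (S : List Bool) (i : ℕ) (h1 : 1 ≤ i) (h2 : i ≤ S.length) :
    (max (excess (ΔEx S) (2 * i)) (excess (ΔEx S) (2 * i + 1)) = excess (ΔEx S) (2 * i)
        ↔ S.getD (i - 1) false = false) ∧
    (min (excess (ΔEx S) (2 * i)) (excess (ΔEx S) (2 * i + 1)) = excess (ΔEx S) (2 * i)
        ↔ S.getD (i - 1) false = true) := by
  obtain ⟨m, rfl⟩ : ∃ m, i = m + 1 := ⟨i - 1, by omega⟩
  have hm : m < S.length := by omega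
  have hget : (ΔEx S)[2 * (m + 1)]? = some S[m] := by
    rw [Nat.mul_succ, getElem?_ΔEx_two_mul_add_two S hm, List.getElem?_eq_getElem hm]
  have hstep := excess_succ (ΔEx S) hget
  rw [max_eq_left_iff, min_eq_left_iff, hstep, Nat.add_sub_cancel, List.getD_eq_getElem _ _ hm]
  cases S[m] <;> simp
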